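/- For a > 0 let D_a := {t > 0 : Σ_{n=1}^∞ aⁿ·e^{−nt}·U_n(t) = +∞}. Then: (i) {t > 0 : a·e^{−t}·(1 − e^{−2t}) ≥ 1} ⊆ D_a ⊆ {t > 0 : a·e^{−t} ≥ 1}; (ii) if 0 < a < 1 then D_a = ∅, while if a ≥ (3√3)/2 then (1/2)·ln 3 ∈ D_a; hence a_{**} := inf{a > 0 : D_a ≠ ∅} satisfies 1 ≤ a_{**} ≤ (3√3)/2; (iii) whenever D_a ≠ ∅, every t ∈ D_a satisfies t ≤ ln a. -/

import Mathlib

open scoped ENNReal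
noncomputable section

/-- Normalized Fourier coefficients of the solution of the complex Burgers equation
with monochromatic data. -/
def burgersU : ℕ → ℝ → ℝ
  | 0 => fun _ => 0
  | 1 => fun _ => 1
  | n+2 => fun t =>
      ∫ s in (0:ℝ)..t,
        Real.exp (-(((n:ℝ)+2) * ((n:ℝ)+1)) * (t - s)) * (((n:ℝ)+2) *
          ∑ k ∈ (Finset.Ico 1 (n+2)).attach,
            burgersU k.1 s * burgersU ((n+2) - k.1) s)
  termination_by n => n
  decreasing_by
  · have := k.2; simp only [Finset.mem_Ico] at this; omega
  · have := k.2; simp only [Finset.mem_Ico] at this; omega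

lemma burgersU_zero : burgersU 0 = fun _ => 0 := by rw [burgersU]

lemma burgersU_one : burgersU 1 = fun _ => 1 := by rw [burgersU]

lemma burgersU_eq (n : ℕ) (t : ℝ) :
    burgersU (n+2) t = ∫ s in (0:ℝ)..t,
        Real.exp (-(((n:ℝ)+2) * ((n:ℝ)+1)) * (t - s)) * (((n:ℝ)+2) *
          ∑ k ∈ Finset.Ico 1 (n+2), burgersU k s * burgersU ((n+2) - k) s) := by
  rw [burgersU]
  simp only []
  refine intervalIntegral.integral_congr fun s _ => ?_
  congr 1
  congr 1
  rw [Finset.sum_attach (Finset.Ico 1 (n+2)) (fun k => burgersU k s * burgersU ((n+2) - k) s)]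

lemma burgersU_continuous : ∀ n, Continuous (burgersU n) := by
  intro n
  induction n using Nat.strong_induction_on with
  | _ n ih =>
    match n with
    | 0 => rw [burgersU_zero]; exact continuous_const
    | 1 => rw [burgersU_one]; exact continuous_const
    | n+2 =>
      have hF : Continuous (fun s => Real.exp ((((n:ℝ)+2) * ((n:ℝ)+1)) * s) * (((n:ℝ)+2) *
          ∑ k ∈ Finset.Ico 1 (n+2), burgersU k s * burgersU ((n+2) - k) s)) := by
        refine (Real.continuous_exp.comp (by fun_prop)).mul (continuous_const.mul ?_)
        refine continuous_finset_sum _ fun k hk => ?_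
        simp only [Finset.mem_Ico] at hk
        exact (ih k (by omega)).mul (ih ((n+2)-k) (by omega))
      have key : ∀ t, burgersU (n+2) t = Real.exp (-(((n:ℝ)+2) * ((n:ℝ)+1)) * t) *
          ∫ s in (0:ℝ)..t, Real.exp ((((n:ℝ)+2) * ((n:ℝ)+1)) * s) * (((n:ℝ)+2) *
            ∑ k ∈ Finset.Ico 1 (n+2), burgersU k s * burgersU ((n+2) - k) s) := by
        intro t
        rw [burgersU_eq, ← intervalIntegral.integral_const_mul]
        refine intervalIntegral.integral_congr fun s _ => ?_
        have h : Real.exp (-(((n:ℝ)+2) * ((n:ℝ)+1)) * (t - s)) =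
            Real.exp (-(((n:ℝ)+2) * ((n:ℝ)+1)) * t) * Real.exp ((((n:ℝ)+2) * ((n:ℝ)+1)) * s) := by
          rw [← Real.exp_add]; ring_nf
        rw [h]; ring
      simp only [funext key]
      exact (Real.continuous_exp.comp (by fun_prop)).mul
        (intervalIntegral.continuous_primitive (fun a b => hF.intervalIntegrable a b) 0)
lemma exp_primitive (N t : ℝ) (hN : 0 < N) :
    (∫ s in (0:ℝ)..t, Real.exp (-N * (t - s)) * N) = 1 - Real.exp (-N * t) := by
  have h : ∀ s ∈ Set.uIcc (0:ℝ) t,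
      HasDerivAt (fun s => Real.exp (-N * (t - s))) (Real.exp (-N * (t - s)) * N) s := by
    intro s _
    have h1 : HasDerivAt (fun s : ℝ => -N * (t - s)) N s := by
      simpa using ((hasDerivAt_id s).const_sub t).const_mul (-N)
    simpa using h1.exp
  have := intervalIntegral.integral_eq_sub_of_hasDerivAt h
    (Continuous.intervalIntegrable (by fun_prop) 0 t)
  simpa using this

lemma burgersU_nonneg : ∀ n, ∀ t, 0 ≤ t → 0 ≤ burgersU n t := by
  intro n
  induction n using Nat.strong_induction_on with
  | _ n ih =>
    match n with
    | 0 => intro t _; rw [burgersU_zero]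
    | 1 => intro t _; rw [burgersU_one]; norm_num
    | n+2 =>
      intro t ht
      rw [burgersU_eq]
      refine intervalIntegral.integral_nonneg ht fun s hs => ?_
      refine mul_nonneg (Real.exp_nonneg _) (mul_nonneg (by positivity) ?_)
      refine Finset.sum_nonneg fun k hk => ?_
      simp only [Finset.mem_Ico] at hk
      exact mul_nonneg (ih k (by omega) s hs.1) (ih ((n+2)-k) (by omega) s hs.1)

lemma burgersU_le_one : ∀ n, ∀ t, 0 ≤ t → burgersU n t ≤ 1 := by
  intro n
  induction n using Nat.strong_induction_on with
  | _ n ih =>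
    match n with
    | 0 => intro t _; rw [burgersU_zero]; norm_num
    | 1 => intro t _; rw [burgersU_one]
    | n+2 =>
      intro t ht
      rw [burgersU_eq]
      set N : ℝ := ((n:ℝ)+2) * ((n:ℝ)+1) with hNdef
      have hN : 0 < N := by positivity
      calc (∫ s in (0:ℝ)..t, Real.exp (-N * (t - s)) * (((n:ℝ)+2) *
              ∑ k ∈ Finset.Ico 1 (n+2), burgersU k s * burgersU ((n+2) - k) s))
          ≤ ∫ s in (0:ℝ)..t, Real.exp (-N * (t - s)) * N := by
            refine intervalIntegral.integral_mono_on ht ?_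
              (Continuous.intervalIntegrable (by fun_prop) 0 t) fun s hs => ?_
            · refine Continuous.intervalIntegrable ?_ 0 t
              refine Continuous.mul (by fun_prop) (continuous_const.mul ?_)
              exact continuous_finset_sum _ fun k hk => by
                simp only [Finset.mem_Ico] at hk
                exact (burgersU_continuous k).mul (burgersU_continuous _)
            · refine mul_le_mul_of_nonneg_left ?_ (Real.exp_nonneg _)
              have hsum : (∑ k ∈ Finset.Ico 1 (n+2), burgersU k s * burgersU ((n+2) - k) s)
                  ≤ (n+1 : ℝ) := by
                calc (∑ k ∈ Finset.Ico 1 (n+2), burgersU k s * burgersU ((n+2) - k) s)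
                    ≤ ∑ _k ∈ Finset.Ico 1 (n+2), (1:ℝ) := by
                      refine Finset.sum_le_sum fun k hk => ?_
                      simp only [Finset.mem_Ico] at hk
                      have h1 := burgersU_nonneg k s hs.1
                      have h2 := burgersU_nonneg ((n+2)-k) s hs.1
                      have h3 := ih k (by omega) s hs.1
                      have h4 := ih ((n+2)-k) (by omega) s hs.1
                      nlinarith
                  _ = (n+1 : ℝ) := by simp
              calc ((n:ℝ)+2) * ∑ k ∈ Finset.Ico 1 (n+2), burgersU k s * burgersU ((n+2) - k) s
                  ≤ ((n:ℝ)+2) * ((n:ℝ)+1) := by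
                    refine mul_le_mul_of_nonneg_left ?_ (by positivity)
                    exact_mod_cast hsum
                _ = N := rfl
        _ = 1 - Real.exp (-N * t) := exp_primitive N t hN
        _ ≤ 1 := by have := Real.exp_nonneg (-N * t); linarith
lemma burgersU_lower : ∀ n, ∀ t, 0 ≤ t →
    (1 - Real.exp (-2*t))^n ≤ burgersU (n+1) t := by
  intro n
  induction n using Nat.strong_induction_on with
  | _ n ih =>
    match n with
    | 0 => intro t _; rw [burgersU_one]; norm_num
    | n+1 =>
      intro t ht
      rw [show n+1+1 = n+2 from rfl, burgersU_eq]
      set N : ℝ := ((n:ℝ)+2) * ((n:ℝ)+1) with hNdef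
      set q : ℝ → ℝ := fun s => 1 - Real.exp (-2*s) with hqdef
      have hq0 : ∀ s : ℝ, 0 ≤ s → 0 ≤ q s := by
        intro s hs
        have : Real.exp (-2*s) ≤ 1 := Real.exp_le_one_iff.mpr (by linarith)
        simpa [hqdef] using this
      have hq1 : ∀ s : ℝ, q s ≤ 1 := by
        intro s; have := Real.exp_pos (-2*s); simp only [hqdef]; linarith
      have hderiv : ∀ s ∈ Set.uIcc (0:ℝ) t,
          HasDerivAt (fun s => Real.exp (-N * (t - s)) * (q s)^(n+1))
            (Real.exp (-N * (t - s)) * N * (q s)^(n+1) +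
             Real.exp (-N * (t - s)) * (((n:ℝ)+1) * (q s)^n * (2 * Real.exp (-2*s)))) s := by
        intro s _
        have h1 : HasDerivAt (fun s : ℝ => Real.exp (-N * (t - s)))
            (Real.exp (-N * (t - s)) * N) s := by
          have : HasDerivAt (fun s : ℝ => -N * (t - s)) N s := by
            simpa using ((hasDerivAt_id s).const_sub t).const_mul (-N)
          simpa using this.exp
        have hq : HasDerivAt q (2 * Real.exp (-2*s)) s := by
          have : HasDerivAt (fun s : ℝ => Real.exp (-2*s)) (Real.exp (-2*s) * (-2)) s := by
            simpa using (((hasDerivAt_id s).const_mul (-2:ℝ)).exp)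
          have h2 := this.const_sub 1
          simpa [hqdef] using h2.congr_deriv (by ring)
        have hg : HasDerivAt (fun s => (q s)^(n+1))
            (((n:ℝ)+1) * (q s)^n * (2 * Real.exp (-2*s))) s := by
          have := hq.fun_pow (n+1)
          simpa [Nat.add_sub_cancel] using this
        simpa using h1.fun_mul hg
      have hint1 : IntervalIntegrable (fun s => Real.exp (-N * (t - s)) * N * (q s)^(n+1) +
             Real.exp (-N * (t - s)) * (((n:ℝ)+1) * (q s)^n * (2 * Real.exp (-2*s))))
             MeasureTheory.volume 0 t := by
        apply Continuous.intervalIntegrable; fun_prop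
      have hftc := intervalIntegral.integral_eq_sub_of_hasDerivAt hderiv hint1
      have hq0val : q 0 = 0 := by simp [hqdef]
      have hmono : (∫ s in (0:ℝ)..t, (Real.exp (-N * (t - s)) * N * (q s)^(n+1) +
             Real.exp (-N * (t - s)) * (((n:ℝ)+1) * (q s)^n * (2 * Real.exp (-2*s)))))
          ≤ ∫ s in (0:ℝ)..t, Real.exp (-N * (t - s)) * (((n:ℝ)+2) *
            ∑ k ∈ Finset.Ico 1 (n+2), burgersU k s * burgersU ((n+2) - k) s) := by
        refine intervalIntegral.integral_mono_on ht hint1 ?_ fun s hs => ?_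
        · refine Continuous.intervalIntegrable ?_ 0 t
          refine Continuous.mul (by fun_prop) (continuous_const.mul ?_)
          exact continuous_finset_sum _ fun k hk =>
            (burgersU_continuous k).mul (burgersU_continuous _)
        · have hqs0 := hq0 s hs.1
          have hqs1 := hq1 s
          have hsum : ((n:ℝ)+1) * (q s)^n ≤
              ∑ k ∈ Finset.Ico 1 (n+2), burgersU k s * burgersU ((n+2) - k) s := by
            have : ∀ k ∈ Finset.Ico 1 (n+2), (q s)^n ≤ burgersU k s * burgersU ((n+2) - k) s := by
              intro k hk
              simp only [Finset.mem_Ico] at hk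
              have e1 : (q s)^(k-1) ≤ burgersU k s := by
                have := ih (k-1) (by omega) s hs.1
                rwa [show k-1+1 = k by omega] at this
              have e2 : (q s)^(n+1-k) ≤ burgersU ((n+2)-k) s := by
                have := ih (n+1-k) (by omega) s hs.1
                rwa [show n+1-k+1 = n+2-k by omega] at this
              calc (q s)^n = (q s)^(k-1) * (q s)^(n+1-k) := by
                    rw [← pow_add]; congr 1; omega
                _ ≤ burgersU k s * burgersU ((n+2)-k) s :=
                    mul_le_mul e1 e2 (by positivity) (le_trans (by positivity) e1)
            calc ((n:ℝ)+1) * (q s)^n = ∑ _k ∈ Finset.Ico 1 (n+2), (q s)^n := by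
                  rw [Finset.sum_const, Nat.card_Ico, nsmul_eq_mul]
                  push_cast; ring
              _ ≤ _ := Finset.sum_le_sum this
          have key : N * (q s)^(n+1) + (((n:ℝ)+1) * (q s)^n * (2 * Real.exp (-2*s)))
              ≤ N * (q s)^n := by
            have he : Real.exp (-2*s) = 1 - q s := by simp [hqdef]
            rw [he]
            have hqn : (0:ℝ) ≤ (q s)^n := by positivity
            have base : 0 ≤ (n:ℝ) * ((n:ℝ)+1) * (q s ^ n * (1 - q s)) :=
              mul_nonneg (mul_nonneg (Nat.cast_nonneg n) (by positivity))
                (mul_nonneg hqn (sub_nonneg.mpr hqs1))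
            have expand : N * (q s)^(n+1) + (((n:ℝ)+1) * (q s)^n * (2 * (1 - q s)))
                = N * q s ^ n - (n:ℝ)*((n:ℝ)+1)*(q s ^ n * (1 - q s)) := by
              rw [hNdef, pow_succ]; ring
            linarith [base, expand.le, expand.ge]
          have : Real.exp (-N * (t - s)) * N * (q s)^(n+1) +
               Real.exp (-N * (t - s)) * (((n:ℝ)+1) * (q s)^n * (2 * Real.exp (-2*s)))
              = Real.exp (-N * (t - s)) * (N * (q s)^(n+1) +
                 (((n:ℝ)+1) * (q s)^n * (2 * Real.exp (-2*s)))) := by ring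
          rw [this]
          refine le_trans (mul_le_mul_of_nonneg_left key (Real.exp_nonneg _)) ?_
          refine mul_le_mul_of_nonneg_left ?_ (Real.exp_nonneg _)
          calc N * (q s)^n = ((n:ℝ)+2) * (((n:ℝ)+1) * (q s)^n) := by rw [hNdef]; ring
            _ ≤ ((n:ℝ)+2) * ∑ k ∈ Finset.Ico 1 (n+2), burgersU k s * burgersU ((n+2) - k) s :=
                mul_le_mul_of_nonneg_left hsum (by positivity)
      calc (1 - Real.exp (-2*t))^(n+1) = q t ^ (n+1) := rfl
        _ = Real.exp (-N * (t - t)) * (q t)^(n+1) - Real.exp (-N * (t - 0)) * (q 0)^(n+1) := by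
            simp [hq0val]
        _ = ∫ s in (0:ℝ)..t, (Real.exp (-N * (t - s)) * N * (q s)^(n+1) +
             Real.exp (-N * (t - s)) * (((n:ℝ)+1) * (q s)^n * (2 * Real.exp (-2*s)))) := hftc.symm
        _ ≤ _ := hmono
/-- D_a : the set of blow-up times, where Σ_{n≥1} aⁿ e^{−nt} U_n(t) = ∞. -/
def blowupSet (a : ℝ) : Set ℝ :=
  {t : ℝ | 0 < t ∧
    (∑' n : ℕ, ENNReal.ofReal
      (a^(n+1) * Real.exp (-((n:ℝ)+1) * t) * burgersU (n+1) t)) = ⊤}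

lemma exp_pow (t : ℝ) (n : ℕ) : Real.exp (-((n:ℝ)+1) * t) = Real.exp (-t)^(n+1) := by
  rw [← Real.exp_nat_mul]
  congr 1
  push_cast; ring

lemma lower_incl {a : ℝ} (ha : 0 < a) :
    {t : ℝ | 0 < t ∧ 1 ≤ a * Real.exp (-t) * (1 - Real.exp (-2*t))} ⊆ blowupSet a := by
  rintro t ⟨ht, h1⟩
  refine ⟨ht, ?_⟩
  set q : ℝ := 1 - Real.exp (-2*t) with hq
  have hqpos : 0 < q := by
    have : Real.exp (-2*t) < 1 := Real.exp_lt_one_iff.mpr (by linarith)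
    simp only [hq]; linarith
  have hterm : ∀ n : ℕ, 1/q ≤ a^(n+1) * Real.exp (-((n:ℝ)+1) * t) * burgersU (n+1) t := by
    intro n
    have hL := burgersU_lower n t ht.le
    have h2 : (a * Real.exp (-t))^(n+1) * q^n ≤
        a^(n+1) * Real.exp (-((n:ℝ)+1) * t) * burgersU (n+1) t := by
      rw [exp_pow, mul_pow] at *
      exact mul_le_mul_of_nonneg_left hL (by positivity)
    have h3 : 1/q ≤ (a * Real.exp (-t))^(n+1) * q^n := by
      rw [div_le_iff₀ hqpos, mul_assoc, ← pow_succ]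
      calc (1:ℝ) = 1^(n+1) := (one_pow _).symm
        _ ≤ (a * Real.exp (-t) * q)^(n+1) := pow_le_pow_left₀ (by norm_num) h1 _
        _ = (a * Real.exp (-t))^(n+1) * q^(n+1) := mul_pow _ _ _
    linarith
  have hbig : ∀ n : ℕ, ENNReal.ofReal (1/q) ≤ ENNReal.ofReal
      (a^(n+1) * Real.exp (-((n:ℝ)+1) * t) * burgersU (n+1) t) :=
    fun n => ENNReal.ofReal_le_ofReal (hterm n)
  have hne : ENNReal.ofReal (1/q) ≠ 0 := by
    simp [ENNReal.ofReal_eq_zero, not_le, hqpos]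
  refine top_le_iff.mp ?_
  calc (⊤ : ℝ≥0∞) = ∑' _ : ℕ, ENNReal.ofReal (1/q) :=
        (ENNReal.tsum_const_eq_top_of_ne_zero hne).symm
    _ ≤ _ := ENNReal.tsum_le_tsum hbig

lemma upper_incl {a : ℝ} (ha : 0 < a) :
    blowupSet a ⊆ {t : ℝ | 0 < t ∧ 1 ≤ a * Real.exp (-t)} := by
  rintro t ⟨ht, htop⟩
  refine ⟨ht, ?_⟩
  by_contra hlt
  push_neg at hlt
  set r : ℝ := a * Real.exp (-t) with hr
  have hr0 : 0 < r := by positivity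
  have hbound : ∀ n : ℕ, ENNReal.ofReal
      (a^(n+1) * Real.exp (-((n:ℝ)+1) * t) * burgersU (n+1) t)
      ≤ (ENNReal.ofReal r)^(n+1) := by
    intro n
    rw [← ENNReal.ofReal_pow hr0.le]
    refine ENNReal.ofReal_le_ofReal ?_
    calc a^(n+1) * Real.exp (-((n:ℝ)+1) * t) * burgersU (n+1) t
        ≤ a^(n+1) * Real.exp (-((n:ℝ)+1) * t) * 1 := by
          refine mul_le_mul_of_nonneg_left (burgersU_le_one _ _ ht.le) (by positivity)
      _ = r^(n+1) := by rw [mul_one, exp_pow, hr, mul_pow]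
  have hrlt : ENNReal.ofReal r < 1 := by
    rw [← ENNReal.ofReal_one]
    exact ENNReal.ofReal_lt_ofReal_iff_of_nonneg hr0.le |>.mpr hlt
  have hfin : (∑' n : ℕ, (ENNReal.ofReal r)^(n+1)) ≠ ⊤ := by
    have h1 : (∑' n : ℕ, (ENNReal.ofReal r)^(n+1)) ≤ ∑' n : ℕ, (ENNReal.ofReal r)^n :=
      ENNReal.tsum_le_tsum fun n => pow_le_pow_of_le_one (zero_le) hrlt.le (by omega)
    rw [ENNReal.tsum_geometric] at h1
    refine ne_top_of_le_ne_top ?_ h1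
    rw [ENNReal.inv_ne_top]
    intro h0
    rw [tsub_eq_zero_iff_le] at h0
    exact absurd (lt_of_lt_of_le hrlt h0) (lt_irrefl _)
  apply hfin
  refine top_le_iff.mp ?_
  calc (⊤:ℝ≥0∞) = _ := htop.symm
    _ ≤ _ := ENNReal.tsum_le_tsum hbound
/-- Bounds for the blow-up set of the complex Burgers solution. -/
theorem stmt12 :
    -- (i)
    (∀ a : ℝ, 0 < a →
      ({t : ℝ | 0 < t ∧ 1 ≤ a * Real.exp (-t) * (1 - Real.exp (-2*t))} ⊆ blowupSet a ∧
       blowupSet a ⊆ {t : ℝ | 0 < t ∧ 1 ≤ a * Real.exp (-t)})) ∧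
    -- (ii)
    (∀ a : ℝ, 0 < a → a < 1 → blowupSet a = ∅) ∧
    (∀ a : ℝ, 3 * Real.sqrt 3 / 2 ≤ a → (1/2) * Real.log 3 ∈ blowupSet a) ∧
    (1 ≤ sInf {a : ℝ | 0 < a ∧ (blowupSet a).Nonempty} ∧
      sInf {a : ℝ | 0 < a ∧ (blowupSet a).Nonempty} ≤ 3 * Real.sqrt 3 / 2) ∧
    -- (iii)
    (∀ a : ℝ, 0 < a → ∀ t ∈ blowupSet a, t ≤ Real.log a) := by
  have hs3 : (0:ℝ) < Real.sqrt 3 := Real.sqrt_pos.mpr (by norm_num)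
  have hs3sq : Real.sqrt 3 ^ 2 = 3 := Real.sq_sqrt (by norm_num)
  -- empty for a < 1
  have hempty : ∀ a : ℝ, 0 < a → a < 1 → blowupSet a = ∅ := by
    intro a ha ha1
    rw [Set.eq_empty_iff_forall_notMem]
    intro t ht
    obtain ⟨htpos, hge⟩ := upper_incl ha ht
    have h1 : Real.exp (-t) < 1 := Real.exp_lt_one_iff.mpr (by linarith)
    nlinarith [Real.exp_pos (-t)]
  -- membership for a ≥ 3√3/2
  have hmem : ∀ a : ℝ, 3 * Real.sqrt 3 / 2 ≤ a → (1/2) * Real.log 3 ∈ blowupSet a := by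
    intro a ha
    have hapos : 0 < a := lt_of_lt_of_le (by positivity) ha
    apply lower_incl hapos
    have hlog : 0 < Real.log 3 := Real.log_pos (by norm_num)
    have he1 : Real.exp (-((1:ℝ)/2 * Real.log 3)) = (Real.sqrt 3)⁻¹ := by
      rw [Real.exp_neg]
      congr 1
      rw [show (1:ℝ)/2 * Real.log 3 = Real.log 3 / 2 by ring, Real.exp_half,
        Real.exp_log (by norm_num)]
    have he2 : Real.exp (-2 * ((1:ℝ)/2 * Real.log 3)) = 1/3 := by
      rw [show -2 * ((1:ℝ)/2 * Real.log 3) = -Real.log 3 by ring, Real.exp_neg,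
        Real.exp_log (by norm_num)]
      norm_num
    refine ⟨by positivity, ?_⟩
    rw [he1, he2]
    have key : 1 ≤ (3 * Real.sqrt 3 / 2) * (Real.sqrt 3)⁻¹ * (1 - 1/3) := by
      have hinv : Real.sqrt 3 * (Real.sqrt 3)⁻¹ = 1 := mul_inv_cancel₀ hs3.ne'
      nlinarith [hinv]
    calc (1:ℝ) ≤ (3 * Real.sqrt 3 / 2) * (Real.sqrt 3)⁻¹ * (1 - 1/3) := key
      _ ≤ a * (Real.sqrt 3)⁻¹ * (1 - 1/3) := by
          have : (0:ℝ) < (Real.sqrt 3)⁻¹ := by positivity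
          nlinarith
  refine ⟨fun a ha => ⟨lower_incl ha, upper_incl ha⟩, hempty, hmem, ⟨?_, ?_⟩, ?_⟩
  · -- 1 ≤ sInf
    have hSne : (3 * Real.sqrt 3 / 2) ∈ {a : ℝ | 0 < a ∧ (blowupSet a).Nonempty} :=
      ⟨by positivity, ⟨_, hmem _ le_rfl⟩⟩
    refine le_csInf ⟨_, hSne⟩ fun b hb => ?_
    by_contra hb1
    push_neg at hb1
    have h := hempty b hb.1 hb1
    exact Set.not_nonempty_empty (h ▸ hb.2)
  · exact csInf_le ⟨0, fun b hb => hb.1.le⟩ ⟨by positivity, ⟨_, hmem _ le_rfl⟩⟩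
  · intro a ha t ht
    obtain ⟨htpos, hge⟩ := upper_incl ha ht
    rw [Real.le_log_iff_exp_le ha]
    have hexp : Real.exp t * Real.exp (-t) = 1 := by rw [← Real.exp_add]; simp
    nlinarith [hexp, Real.exp_pos (-t), Real.exp_pos t,
      mul_le_mul_of_nonneg_left hge (Real.exp_pos t).le]

end
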